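/- arXiv:2009.08177 — 2 statements merged into one kernel-verified Lean document; each statement's English description precedes it below -/
import Mathlib

section
/- Let G_sw be a connected strength-weighted graph, {E_1, …, E_k} a c-partition of E(G), e = uv ∈ E_i, U = ℓ_i(u), V = ℓ_i(v), and E = UV the corresponding edge of the strength-weighted quotient graph G_i = G_sw/E_i. Then n_u(e|G_sw) = n_U(E|G_i) and n_v(e|G_sw) = n_V(E|G_i). -/
open SimpleGraph

namespace SzegedCut

variable {V : Type*}

/-- `N_u(e|G)` for the edge `e = uv`: vertices strictly closer to `u` than to `v`. -/
def Nset (G : SimpleGraph V) (u v : V) : Set V := {x | G.dist u x < G.dist v x}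

/-- `N_0(e|G)` for the edge `e = uv`: vertices equidistant from `u` and `v`. -/
def N0set (G : SimpleGraph V) (u v : V) : Set V := {x | G.dist u x = G.dist v x}

/-- Distance from a vertex to an edge: minimum over the endpoints of the edge. -/
noncomputable def eDist (G : SimpleGraph V) (u : V) : Sym2 V → ℕ :=
  Sym2.lift ⟨fun x y => min (G.dist u x) (G.dist u y), fun x y => min_comm _ _⟩

/-- `M_u(e|G)` for the edge `e = uv`: edges strictly closer to `u` than to `v`. -/
def Mset (G : SimpleGraph V) (u v : V) : Set (Sym2 V) :=
  {f | f ∈ G.edgeSet ∧ eDist G u f < eDist G v f}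

/-- `M_0(e|G)` for the edge `e = uv`: edges equidistant from `u` and `v`. -/
def M0set (G : SimpleGraph V) (u v : V) : Set (Sym2 V) :=
  {f | f ∈ G.edgeSet ∧ eDist G u f = eDist G v f}

/-- The Djoković–Winkler relation `Θ` on the edges of `G`. -/
def Theta (G : SimpleGraph V) (e₁ e₂ : Sym2 V) : Prop :=
  e₁ ∈ G.edgeSet ∧ e₂ ∈ G.edgeSet ∧
    ∃ u₁ v₁ u₂ v₂, e₁ = s(u₁, v₁) ∧ e₂ = s(u₂, v₂) ∧
      G.dist u₁ u₂ + G.dist v₁ v₂ ≠ G.dist u₁ v₂ + G.dist u₂ v₁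

/-- `Θ*`, the transitive closure of the Djoković–Winkler relation. -/
def ThetaStar (G : SimpleGraph V) : Sym2 V → Sym2 V → Prop :=
  Relation.TransGen (Theta G)

/-- A c-partition of `E(G)`: a partition of the edge set each of whose parts is a
union of `Θ*`-classes (equivalently, is closed under `Θ*`). -/
def IsCPartition (G : SimpleGraph V) {k : ℕ} (P : Fin k → Set (Sym2 V)) : Prop :=
  (⋃ i, P i) = G.edgeSet ∧
  (∀ i j, i ≠ j → Disjoint (P i) (P j)) ∧
  (∀ i, ∀ e ∈ P i, ∀ f, ThetaStar G e f → f ∈ P i)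

/-- The connected components of `G \ F`, i.e. the vertices of the quotient graph `G/F`. -/
abbrev Comp (G : SimpleGraph V) (F : Set (Sym2 V)) := (G.deleteEdges F).ConnectedComponent

/-- `ℓ(u)`: the connected component of `G \ F` containing `u`. -/
def proj (G : SimpleGraph V) (F : Set (Sym2 V)) (u : V) : Comp G F :=
  (G.deleteEdges F).connectedComponentMk u

/-- The quotient graph `G/F`: vertices are the connected components of `G \ F`,
two components being adjacent iff some vertex of one is adjacent in `G` to a
vertex of the other. -/
def quotGraph (G : SimpleGraph V) (F : Set (Sym2 V)) : SimpleGraph (Comp G F) where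
  Adj X Y := X ≠ Y ∧ ∃ x y, G.Adj x y ∧ proj G F x = X ∧ proj G F y = Y
  symm := ⟨by
    rintro X Y ⟨hne, x, y, hadj, hx, hy⟩
    exact ⟨hne.symm, y, x, hadj.symm, hy, hx⟩⟩
  loopless := ⟨by rintro X ⟨hne, -⟩; exact hne rfl⟩

/-- `Ê` for a quotient edge `E`: the edges of `G` joining the two components of `E`. -/
def hatE (G : SimpleGraph V) (F : Set (Sym2 V)) (E : Sym2 (Comp G F)) : Set (Sym2 V) :=
  {e | e ∈ G.edgeSet ∧ e.map (proj G F) = E}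

/-- `E(X)` for a component `X` of `G \ F`: the edges of `G \ F` lying inside `X`. -/
def compEdges (G : SimpleGraph V) (F : Set (Sym2 V)) (X : Comp G F) : Set (Sym2 V) :=
  {f | f ∈ (G.deleteEdges F).edgeSet ∧ ∀ x ∈ f, x ∈ X.supp}

/-- Sum of a weight function over a set. -/
noncomputable def vsum {α : Type*} (s : Set α) (w : α → ℝ) : ℝ := ∑ᶠ x ∈ s, w x

/-- `n_u(e|G_sw)` for `e = uv`. -/
noncomputable def nval (G : SimpleGraph V) (wv : V → ℝ) (u v : V) : ℝ :=
  vsum (Nset G u v) wv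

/-- `n_0(e|G_sw)` for `e = uv`. -/
noncomputable def n0val (G : SimpleGraph V) (wv : V → ℝ) (u v : V) : ℝ :=
  vsum (N0set G u v) wv

/-- `m_u(e|G_sw)` for `e = uv`. -/
noncomputable def mval (G : SimpleGraph V) (sv : V → ℝ) (se : Sym2 V → ℝ) (u v : V) : ℝ :=
  vsum (Nset G u v) sv + vsum (Mset G u v) se

/-- `m_0(e|G_sw)` for `e = uv`. -/
noncomputable def m0val (G : SimpleGraph V) (sv : V → ℝ) (se : Sym2 V → ℝ) (u v : V) : ℝ :=
  vsum (N0set G u v) sv + vsum (M0set G u v) se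

lemma N0set_comm (G : SimpleGraph V) (u v : V) : N0set G u v = N0set G v u :=
  Set.ext fun _ => eq_comm

lemma M0set_comm (G : SimpleGraph V) (u v : V) : M0set G u v = M0set G v u :=
  Set.ext fun _ => and_congr_right fun _ => eq_comm

lemma n0val_comm (G : SimpleGraph V) (wv : V → ℝ) (u v : V) :
    n0val G wv u v = n0val G wv v u := by rw [n0val, n0val, N0set_comm]

lemma m0val_comm (G : SimpleGraph V) (sv : V → ℝ) (se : Sym2 V → ℝ) (u v : V) :
    m0val G sv se u v = m0val G sv se v u := by
  rw [m0val, m0val, N0set_comm, M0set_comm]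

/-- A regular function of six variables: symmetric in the first two and in the
next two coordinates. -/
def IsRegular (F : ℝ → ℝ → ℝ → ℝ → ℝ → ℝ → ℝ) : Prop :=
  ∀ a b c d x y, F a b c d x y = F b a d c x y

/-- `F(e|G_sw)` for a regular function `F`. -/
noncomputable def FEdge (G : SimpleGraph V) (wv sv : V → ℝ) (se : Sym2 V → ℝ)
    (F : ℝ → ℝ → ℝ → ℝ → ℝ → ℝ → ℝ) (hF : IsRegular F) : Sym2 V → ℝ :=
  Sym2.lift ⟨fun u v =>
      F (nval G wv u v) (nval G wv v u) (mval G sv se u v) (mval G sv se v u)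
        (n0val G wv u v) (m0val G sv se u v),
    fun u v => by dsimp only; rw [hF, n0val_comm, m0val_comm]⟩

/-- The general Szeged-like topological index `TI_F(G_sw)`. -/
noncomputable def TI (G : SimpleGraph V) (wv sv : V → ℝ) (we se : Sym2 V → ℝ)
    (F : ℝ → ℝ → ℝ → ℝ → ℝ → ℝ → ℝ) (hF : IsRegular F) : ℝ :=
  ∑ᶠ e ∈ G.edgeSet, we e * FEdge G wv sv se F hF e

/-- Vertex weight `w_v^i` of the strength-weighted quotient graph. -/
noncomputable def qwv (G : SimpleGraph V) (F : Set (Sym2 V)) (wv : V → ℝ)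
    (X : Comp G F) : ℝ :=
  vsum X.supp wv

/-- Vertex weight `s_v^i` of the strength-weighted quotient graph. -/
noncomputable def qsv (G : SimpleGraph V) (F : Set (Sym2 V)) (sv : V → ℝ)
    (se : Sym2 V → ℝ) (X : Comp G F) : ℝ :=
  vsum (compEdges G F X) se + vsum X.supp sv

/-- Edge weight `w_e^i` of the strength-weighted quotient graph. -/
noncomputable def qwe (G : SimpleGraph V) (F : Set (Sym2 V)) (we : Sym2 V → ℝ)
    (E : Sym2 (Comp G F)) : ℝ :=
  vsum (hatE G F E) we

/-- Edge weight `s_e^i` of the strength-weighted quotient graph. -/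
noncomputable def qse (G : SimpleGraph V) (F : Set (Sym2 V)) (se : Sym2 V → ℝ)
    (E : Sym2 (Comp G F)) : ℝ :=
  vsum (hatE G F E) se



open scoped Classical in
/-- Sum of `τ` over the darts of a walk whose edges lie in `F`. -/
noncomputable def fsumW {V : Type*} {G : SimpleGraph V} (F : Set (Sym2 V))
    (τ : G.Dart → ℤ) {u v : V} (w : G.Walk u v) : ℤ :=
  (w.darts.map (fun d => if d.edge ∈ F then τ d else 0)).sum


section fsumW

variable {G : SimpleGraph V} {F : Set (Sym2 V)} {τ τ' : G.Dart → ℤ}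

open scoped Classical

@[simp] lemma fsumW_nil {u : V} : fsumW F τ (SimpleGraph.Walk.nil : G.Walk u u) = 0 := by
  simp [fsumW]

lemma fsumW_cons {u v w : V} (h : G.Adj u v) (p : G.Walk v w) :
    fsumW F τ (SimpleGraph.Walk.cons h p) =
      (if s(u, v) ∈ F then τ ⟨(u, v), h⟩ else 0) + fsumW F τ p := by
  simp [fsumW, SimpleGraph.Walk.darts_cons, SimpleGraph.Dart.edge]
  congr

lemma fsumW_append {u v w : V} (p : G.Walk u v) (q : G.Walk v w) :
    fsumW F τ (p.append q) = fsumW F τ p + fsumW F τ q := by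
  simp [fsumW, SimpleGraph.Walk.darts_append]

@[simp] lemma fsumW_zero {u v : V} (w : G.Walk u v) :
    fsumW F (fun _ => (0 : ℤ)) w = 0 := by
  simp [fsumW]

lemma fsumW_add {f g : G.Dart → ℤ} {u v : V} (w : G.Walk u v) :
    fsumW F (fun d => f d + g d) w = fsumW F f w + fsumW F g w := by
  induction w with
  | nil => simp
  | @cons a b c hadj p ih =>
    rw [fsumW_cons, fsumW_cons, fsumW_cons, ih]
    by_cases hF : s(a, b) ∈ F <;> simp [hF] <;> ring

lemma fsumW_congr {u v : V} {w : G.Walk u v}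
    (h : ∀ d ∈ w.darts, d.edge ∈ F → τ d = τ' d) :
    fsumW F τ w = fsumW F τ' w := by
  unfold fsumW
  congr 1
  apply List.map_congr_left
  intro d hd
  by_cases hdF : d.edge ∈ F
  · simp [hdF, h d hd hdF]
  · simp [hdF]

lemma fsumW_le {u v : V} {w : G.Walk u v} {c : ℤ}
    (h : ∀ d ∈ w.darts, d.edge ∈ F → τ d ≤ c) (hc : 0 ≤ c) :
    fsumW F τ w ≤ c * fsumW F (fun _ => 1) w := by
  induction w with
  | nil => simp
  | @cons a b e hadj p ih =>
    rw [fsumW_cons, fsumW_cons, mul_add]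
    have h1 : ∀ d ∈ p.darts, d.edge ∈ F → τ d ≤ c := by
      intro d hd; exact h d (by simp [SimpleGraph.Walk.darts_cons, hd])
    refine add_le_add ?_ (ih h1)
    by_cases hF : s(a, b) ∈ F
    · simp only [hF, if_true, mul_one]
      exact h _ (by simp [SimpleGraph.Walk.darts_cons])
        (by simpa [SimpleGraph.Dart.edge] using hF)
    · simp [hF]

/-- Telescoping: if `σ` is constant across the non-`F` darts of `w`, then the sum of the
increments over the `F`-darts equals the total increment. -/
lemma fsumW_telescope {σ : V → ℤ} {u v : V} (w : G.Walk u v)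
    (h : ∀ d ∈ w.darts, d.edge ∉ F → σ d.snd = σ d.fst) :
    fsumW F (fun d => σ d.snd - σ d.fst) w = σ v - σ u := by
  induction w with
  | nil => simp
  | @cons a b e hadj p ih =>
    rw [fsumW_cons]
    have htail : ∀ d ∈ p.darts, d.edge ∉ F → σ d.snd = σ d.fst := by
      intro d hd; exact h d (by simp [SimpleGraph.Walk.darts_cons, hd])
    rw [ih htail]
    by_cases hF : s(a, b) ∈ F
    · simp only [hF, if_true]; ring
    · have heq := h ⟨(a, b), hadj⟩ (by simp [SimpleGraph.Walk.darts_cons])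
        (by simpa [SimpleGraph.Dart.edge] using hF)
      simp only [hF, if_false]
      have heq' : σ b = σ a := heq
      omega

/-- Exchange the order of two nested `fsumW` sums. -/
lemma fsumW_comm {W' : Type*} {G' : SimpleGraph W'} {F' : Set (Sym2 W')}
    {u v : V} {u' v' : W'} (w : G.Walk u v) (w' : G'.Walk u' v')
    (h : G.Dart → G'.Dart → ℤ) :
    fsumW F (fun d => fsumW F' (fun d' => h d d') w') w =
      fsumW F' (fun d' => fsumW F (fun d => h d d') w) w' := by
  induction w with
  | nil => simp
  | @cons a b e hadj p ih =>
    rw [fsumW_cons, ih]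
    have hrw : (fun d' => fsumW F (fun d => h d d') (SimpleGraph.Walk.cons hadj p)) =
        fun d' => (if s(a, b) ∈ F then h ⟨(a, b), hadj⟩ d' else 0) +
          fsumW F (fun d => h d d') p := funext fun d' => fsumW_cons hadj p
    rw [hrw, fsumW_add]
    congr 1
    by_cases hF : s(a, b) ∈ F
    · simp only [hF, if_true]
    · simp only [hF, if_false, fsumW_zero]

end fsumW

section sig

variable {G : SimpleGraph V} {F : Set (Sym2 V)}

/-- `σ_{(a,b)}(x) = d(a,x) - d(b,x)`. -/
noncomputable def sig (G : SimpleGraph V) (a b x : V) : ℤ :=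
  (G.dist a x : ℤ) - (G.dist b x : ℤ)

lemma dist_adj_one {a b : V} (h : G.Adj a b) : G.dist a b = 1 :=
  (SimpleGraph.dist_eq_one_iff_adj).mpr h

lemma sig_le_one (hG : G.Connected) {a b : V} (h : G.Adj a b) (x : V) :
    sig G a b x ≤ 1 := by
  have h1 : G.dist a x ≤ G.dist a b + G.dist b x := hG.dist_triangle
  have h2 : G.dist a b = 1 := dist_adj_one h
  unfold sig; omega

lemma neg_one_le_sig (hG : G.Connected) {a b : V} (h : G.Adj a b) (x : V) :
    -1 ≤ sig G a b x := by
  have h1 : G.dist b x ≤ G.dist b a + G.dist a x := hG.dist_triangle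
  have h2 : G.dist b a = 1 := dist_adj_one h.symm
  unfold sig; omega

lemma sig_reciprocity (G : SimpleGraph V) (a b s t : V) :
    sig G a b t - sig G a b s = sig G s t b - sig G s t a := by
  unfold sig
  have h1 : G.dist a t = G.dist t a := G.dist_comm
  have h2 : G.dist b t = G.dist t b := G.dist_comm
  have h3 : G.dist a s = G.dist s a := G.dist_comm
  have h4 : G.dist b s = G.dist s b := G.dist_comm
  omega

lemma theta_of_sig_ne {a b s t : V} (hab : s(a, b) ∈ G.edgeSet)
    (hst : s(s, t) ∈ G.edgeSet) (hne : sig G a b s ≠ sig G a b t) :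
    Theta G s(a, b) s(s, t) := by
  refine ⟨hab, hst, a, b, s, t, rfl, rfl, fun hEq => hne ?_⟩
  have hc : G.dist s b = G.dist b s := G.dist_comm
  simp only [sig]
  omega

/-- σ of an `F`-edge is constant across non-`F` edges, provided `F` is `Θ`-closed. -/
lemma sig_const_of_closed (hsub : F ⊆ G.edgeSet)
    (hclosed : ∀ e ∈ F, ∀ f, Theta G e f → f ∈ F)
    {a b s t : V} (hab : s(a, b) ∈ F) (hadj : G.Adj s t) (hst : s(s, t) ∉ F) :
    sig G a b t = sig G a b s := by
  by_contra h
  exact hst (hclosed _ hab _ (theta_of_sig_ne (hsub hab) (G.mem_edgeSet.mpr hadj)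
    fun hEq => h hEq.symm))

/-- Every dart of a geodesic walk satisfies the standard distance identities. -/
lemma geodesic_dart_facts (hG : G.Connected) {x y : V} (w : G.Walk x y)
    (hw : w.length = G.dist x y) :
    ∀ d ∈ w.darts, G.dist x d.fst + G.dist d.fst y = G.dist x y ∧
      G.dist x d.snd + G.dist d.snd y = G.dist x y ∧
      G.dist d.fst y = G.dist d.snd y + 1 := by
  induction w with
  | nil => simp
  | @cons a b c hadj p ih =>
    have hab1 : G.dist a b = 1 := dist_adj_one hadj
    have hd1 : G.dist b c ≤ p.length := SimpleGraph.dist_le p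
    have hd2 : G.dist a c ≤ G.dist a b + G.dist b c := hG.dist_triangle
    rw [SimpleGraph.Walk.length_cons] at hw
    have hpgeo : p.length = G.dist b c := by omega
    have hstep : G.dist a c = G.dist b c + 1 := by omega
    intro d hd
    rw [SimpleGraph.Walk.darts_cons, List.mem_cons] at hd
    rcases hd with rfl | hd
    · exact ⟨by simp, by simpa using by omega, by simpa using hstep⟩
    · obtain ⟨hA, hB, hC⟩ := ih hpgeo d hd
      have t1 : G.dist a d.fst ≤ G.dist a b + G.dist b d.fst := hG.dist_triangle
      have t2 : G.dist a c ≤ G.dist a d.fst + G.dist d.fst c := hG.dist_triangle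
      have t3 : G.dist a d.snd ≤ G.dist a b + G.dist b d.snd := hG.dist_triangle
      have t4 : G.dist a c ≤ G.dist a d.snd + G.dist d.snd c := hG.dist_triangle
      exact ⟨by omega, by omega, hC⟩

lemma geodesic_dart_sig (hG : G.Connected) {x y : V} (w : G.Walk x y)
    (hw : w.length = G.dist x y) :
    ∀ d ∈ w.darts, sig G d.fst d.snd x = -1 ∧ sig G d.fst d.snd y = 1 := by
  intro d hd
  obtain ⟨hA, hB, hC⟩ := geodesic_dart_facts hG w hw d hd
  have c1 : G.dist d.fst x = G.dist x d.fst := G.dist_comm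
  have c2 : G.dist d.snd x = G.dist x d.snd := G.dist_comm
  unfold sig
  constructor <;> omega

end sig

section core

variable {G : SimpleGraph V} {F : Set (Sym2 V)}

lemma dart_edge_eq (d : G.Dart) : d.edge = s(d.fst, d.snd) := rfl

/-- The fundamental double-counting identity: for a geodesic `P` and an arbitrary walk `Q`
with the same endpoints, the sum over the `F`-darts of `Q` of the increment of the
corresponding σ between the endpoints equals twice the number of `F`-darts of `P`. -/
lemma two_mul_fcount_eq (hG : G.Connected) (hsub : F ⊆ G.edgeSet)
    (hclosed : ∀ e ∈ F, ∀ f, Theta G e f → f ∈ F)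
    {x y : V} (P Q : G.Walk x y) (hP : P.length = G.dist x y) :
    fsumW F (fun d => sig G d.fst d.snd y - sig G d.fst d.snd x) Q =
      2 * fsumW F (fun _ => (1 : ℤ)) P := by
  have const : ∀ (a b : V), s(a, b) ∈ F → ∀ {p q : V} (w : G.Walk p q),
      fsumW F (fun d => sig G a b d.snd - sig G a b d.fst) w = sig G a b q - sig G a b p := by
    intro a b habF p q w
    exact fsumW_telescope w (fun d hd hdF =>
      sig_const_of_closed hsub hclosed habF d.adj (by rwa [dart_edge_eq] at hdF))
  calc fsumW F (fun d => sig G d.fst d.snd y - sig G d.fst d.snd x) Q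
      = fsumW F (fun dq => fsumW F
          (fun dp => sig G dq.fst dq.snd dp.snd - sig G dq.fst dq.snd dp.fst) P) Q := by
        refine fsumW_congr (fun dq _ hdqF => ?_)
        rw [const dq.fst dq.snd (by rwa [dart_edge_eq] at hdqF) P]
    _ = fsumW F (fun dq => fsumW F
          (fun dp => sig G dp.fst dp.snd dq.snd - sig G dp.fst dp.snd dq.fst) P) Q := by
        refine fsumW_congr (fun dq _ _ => fsumW_congr (fun dp _ _ => ?_))
        exact sig_reciprocity G dq.fst dq.snd dp.fst dp.snd
    _ = fsumW F (fun dp => fsumW F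
          (fun dq => sig G dp.fst dp.snd dq.snd - sig G dp.fst dp.snd dq.fst) Q) P := by
        exact fsumW_comm Q P _
    _ = fsumW F (fun dp => sig G dp.fst dp.snd y - sig G dp.fst dp.snd x) P := by
        refine fsumW_congr (fun dp _ hdpF => ?_)
        rw [const dp.fst dp.snd (by rwa [dart_edge_eq] at hdpF) Q]
    _ = fsumW F (fun _ => (2 : ℤ)) P := by
        refine fsumW_congr (fun dp hdp _ => ?_)
        obtain ⟨h1, h2⟩ := geodesic_dart_sig hG P hP dp hdp
        omega
    _ = 2 * fsumW F (fun _ => (1 : ℤ)) P := by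
        rw [show (fun _ : G.Dart => (2 : ℤ)) = (fun _ => (1 : ℤ) + 1) from rfl, fsumW_add]
        ring

/-- A geodesic crosses `F` at most as often as any other walk with the same endpoints. -/
lemma fcount_geodesic_le (hG : G.Connected) (hsub : F ⊆ G.edgeSet)
    (hclosed : ∀ e ∈ F, ∀ f, Theta G e f → f ∈ F)
    {x y : V} (P Q : G.Walk x y) (hP : P.length = G.dist x y) :
    fsumW F (fun _ => (1 : ℤ)) P ≤ fsumW F (fun _ => (1 : ℤ)) Q := by
  have h := two_mul_fcount_eq hG hsub hclosed P Q hP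
  have hle : fsumW F (fun d => sig G d.fst d.snd y - sig G d.fst d.snd x) Q ≤
      2 * fsumW F (fun _ => (1 : ℤ)) Q := by
    refine fsumW_le (fun d _ _ => ?_) (by norm_num)
    have := sig_le_one hG d.adj y
    have := neg_one_le_sig hG d.adj x
    omega
  omega

end core

section quot

open scoped Classical

variable {G : SimpleGraph V} {F : Set (Sym2 V)}

lemma walk_of_delete {p q : V} (h : (G.deleteEdges F).Reachable p q) :
    ∃ w : G.Walk p q, fsumW F (fun _ => (1 : ℤ)) w = 0 := by
  obtain ⟨w'⟩ := h
  induction w' with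
  | nil => exact ⟨.nil, by simp⟩
  | @cons a b c hadj' p' ih =>
    obtain ⟨hadj, hnF⟩ := (SimpleGraph.deleteEdges_adj).mp hadj'
    obtain ⟨w, hw⟩ := ih
    exact ⟨.cons hadj w, by simp [fsumW_cons, hnF, hw]⟩

lemma exists_quot_walk {p q : V} (w : G.Walk p q) :
    ∃ W : (quotGraph G F).Walk (proj G F p) (proj G F q),
      (W.length : ℤ) ≤ fsumW F (fun _ => (1 : ℤ)) w := by
  induction w with
  | nil => exact ⟨.nil, by simp⟩
  | @cons a b c hadj pw ih =>
    obtain ⟨W', hW'⟩ := ih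
    rw [fsumW_cons]
    by_cases hF : s(a, b) ∈ F
    · by_cases heq : proj G F a = proj G F b
      · exact ⟨W'.copy heq.symm rfl, by rw [SimpleGraph.Walk.length_copy]; simp [hF]; omega⟩
      · exact ⟨.cons (show (quotGraph G F).Adj _ _ from ⟨heq, a, b, hadj, rfl, rfl⟩) W', by
          rw [SimpleGraph.Walk.length_cons]; simp [hF]; push_cast; omega⟩
    · have heq : proj G F a = proj G F b :=
        SimpleGraph.ConnectedComponent.sound
          ((SimpleGraph.deleteEdges_adj.mpr ⟨hadj, hF⟩).reachable)
      exact ⟨W'.copy heq.symm rfl, by rw [SimpleGraph.Walk.length_copy]; simpa [hF] using hW'⟩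

lemma quot_connected (hG : G.Connected) : (quotGraph G F).Connected := by
  rw [SimpleGraph.connected_iff]
  refine ⟨?_, ?_⟩
  · intro X Y
    refine SimpleGraph.ConnectedComponent.ind₂ (fun p q => ?_) X Y
    obtain ⟨w⟩ := hG p q
    obtain ⟨W, -⟩ := exists_quot_walk (F := F) w
    exact ⟨W⟩
  · obtain ⟨v⟩ := hG.nonempty
    exact ⟨proj G F v⟩

lemma exists_lift_walk : ∀ {X Y : Comp G F} (W : (quotGraph G F).Walk X Y) (p q : V),
    proj G F p = X → proj G F q = Y →
    ∃ w : G.Walk p q, fsumW F (fun _ => (1 : ℤ)) w ≤ W.length := by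
  intro X Y W
  induction W with
  | nil =>
    intro p q hp hq
    obtain ⟨w, hw⟩ := walk_of_delete
      (SimpleGraph.ConnectedComponent.exact (hp.trans hq.symm))
    exact ⟨w, by simp [hw]⟩
  | @cons X Z Y hXZ W' ih =>
    intro p q hp hq
    obtain ⟨hne, xx, yy, hadj, hx, hy⟩ := id hXZ
    obtain ⟨w1, hw1⟩ := walk_of_delete
      (SimpleGraph.ConnectedComponent.exact (hp.trans hx.symm))
    obtain ⟨w2, hw2⟩ := ih yy q hy hq
    refine ⟨w1.append (.cons hadj w2), ?_⟩
    rw [fsumW_append, fsumW_cons, SimpleGraph.Walk.length_cons]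
    have hle : (if s(xx, yy) ∈ F then (1 : ℤ) else 0) ≤ 1 := by split <;> norm_num
    push_cast
    omega

lemma qdist_le_fsum {p q : V} (w : G.Walk p q) :
    (((quotGraph G F).dist (proj G F p) (proj G F q) : ℕ) : ℤ) ≤
      fsumW F (fun _ => (1 : ℤ)) w := by
  obtain ⟨W, hW⟩ := exists_quot_walk (F := F) w
  have := SimpleGraph.dist_le W
  omega

lemma exists_fsum_le_qdist (hG : G.Connected) (p q : V) :
    ∃ w : G.Walk p q, fsumW F (fun _ => (1 : ℤ)) w ≤
      ((quotGraph G F).dist (proj G F p) (proj G F q) : ℤ) := by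
  obtain ⟨W, hW⟩ := (quot_connected (F := F) hG).exists_walk_length_eq_dist
    (proj G F p) (proj G F q)
  obtain ⟨w, hw⟩ := exists_lift_walk W p q rfl rfl
  exact ⟨w, by omega⟩

/-- For a `Θ`-closed `F`, the number of `F`-edges of **any** geodesic equals the
distance in the quotient graph. -/
lemma fsum_geodesic_eq_qdist (hG : G.Connected) (hsub : F ⊆ G.edgeSet)
    (hclosed : ∀ e ∈ F, ∀ f, Theta G e f → f ∈ F)
    {p q : V} (P : G.Walk p q) (hP : P.length = G.dist p q) :
    fsumW F (fun _ => (1 : ℤ)) P =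
      ((quotGraph G F).dist (proj G F p) (proj G F q) : ℤ) := by
  refine le_antisymm ?_ (qdist_le_fsum P)
  obtain ⟨w, hw⟩ := exists_fsum_le_qdist (F := F) hG p q
  exact le_trans (fcount_geodesic_le hG hsub hclosed P w hP) hw

end quot

section claimD

open scoped Classical

variable {G : SimpleGraph V} {F : Set (Sym2 V)}

/-- quotient distance, as an integer. -/
noncomputable def qdist (G : SimpleGraph V) (F : Set (Sym2 V)) (x y : V) : ℤ :=
  ((quotGraph G F).dist (proj G F x) (proj G F y) : ℤ)

lemma fsumW_concat {τ : G.Dart → ℤ} {x a b : V} (P : G.Walk x a) (hadj : G.Adj a b) :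
    fsumW F τ (P.concat hadj) =
      fsumW F τ P + (if s(a, b) ∈ F then τ ⟨(a, b), hadj⟩ else 0) := by
  rw [SimpleGraph.Walk.concat_eq_append, fsumW_append, fsumW_cons, fsumW_nil]
  ring

variable (hG : G.Connected) (hsub : F ⊆ G.edgeSet)
  (hclosed : ∀ e ∈ F, ∀ f, Theta G e f → f ∈ F)

include hG hsub hclosed

/-- Claim D, case σ = -1 : if `x` is strictly closer to `a`, the quotient distance
to `ℓb` is one more than the quotient distance to `ℓa`. -/
lemma qdist_succ_of_lt {a b x : V} (hab : s(a, b) ∈ F)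
    (h : G.dist x b = G.dist x a + 1) :
    qdist G F x b = qdist G F x a + 1 := by
  have hadj : G.Adj a b := G.mem_edgeSet.mp (hsub hab)
  obtain ⟨P, hP⟩ := hG.exists_walk_length_eq_dist x a
  have hQlen : (P.concat hadj).length = G.dist x b := by
    rw [SimpleGraph.Walk.length_concat, hP, h]
  have h1 := fsum_geodesic_eq_qdist hG hsub hclosed (P.concat hadj) hQlen
  have h2 := fsum_geodesic_eq_qdist hG hsub hclosed P hP
  rw [fsumW_concat, if_pos hab] at h1
  unfold qdist
  omega

/-- Claim D, case σ = 0, inequality: if `x` is equidistant from `a` and `b`, then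
the quotient distance to `ℓb` is at most that to `ℓa`. -/
lemma qdist_le_of_eq {a b x : V} (hab : s(a, b) ∈ F)
    (h : G.dist x a = G.dist x b) :
    qdist G F x b ≤ qdist G F x a := by
  have hadj : G.Adj a b := G.mem_edgeSet.mp (hsub hab)
  obtain ⟨P, hP⟩ := hG.exists_walk_length_eq_dist x b
  obtain ⟨A, hA⟩ := hG.exists_walk_length_eq_dist x a
  have key := two_mul_fcount_eq hG hsub hclosed P (A.concat hadj) hP
  rw [fsumW_concat, if_pos hab] at key
  simp only [show ((⟨(a, b), hadj⟩ : G.Dart).toProd.1) = a from rfl,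
    show ((⟨(a, b), hadj⟩ : G.Dart).toProd.2) = b from rfl] at key
  -- bound the sum over the darts of `A`
  have hbound : fsumW F (fun d => sig G d.fst d.snd b - sig G d.fst d.snd x) A ≤
      2 * fsumW F (fun _ => (1 : ℤ)) A := by
    refine fsumW_le (fun d hd _ => ?_) (by norm_num)
    have h1 := (geodesic_dart_sig hG A hA d hd).1
    have h2 := sig_le_one hG d.adj b
    omega
  -- the extra term equals 1
  have hterm : sig G a b b - sig G a b x = 1 := by
    have hd1 : G.dist a b = 1 := dist_adj_one hadj
    have hd2 : G.dist b b = 0 := SimpleGraph.dist_self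
    have hc1 : G.dist a x = G.dist x a := G.dist_comm
    have hc2 : G.dist b x = G.dist x b := G.dist_comm
    unfold sig; omega
  have hPq := fsum_geodesic_eq_qdist hG hsub hclosed P hP
  have hAq := fsum_geodesic_eq_qdist hG hsub hclosed A hA
  unfold qdist
  omega

/-- Claim D, full trichotomy. -/
lemma dist_lt_iff_qdist_lt {a b x : V} (hab : s(a, b) ∈ F) :
    G.dist x a < G.dist x b ↔ qdist G F x a < qdist G F x b := by
  have hadj : G.Adj a b := G.mem_edgeSet.mp (hsub hab)
  have hba : s(b, a) ∈ F := by rwa [Sym2.eq_swap]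
  have htri1 : G.dist x b ≤ G.dist x a + G.dist a b := hG.dist_triangle
  have htri2 : G.dist x a ≤ G.dist x b + G.dist b a := hG.dist_triangle
  have h1 : G.dist a b = 1 := dist_adj_one hadj
  have h2 : G.dist b a = 1 := dist_adj_one hadj.symm
  constructor
  · intro h
    have : G.dist x b = G.dist x a + 1 := by omega
    have := qdist_succ_of_lt hG hsub hclosed hab this
    omega
  · intro h
    by_contra hcon
    rcases Nat.lt_or_ge (G.dist x b) (G.dist x a) with hlt | hge
    · have : G.dist x a = G.dist x b + 1 := by omega
      have := qdist_succ_of_lt hG hsub hclosed hba this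
      omega
    · have heq : G.dist x a = G.dist x b := by omega
      have hle1 := qdist_le_of_eq hG hsub hclosed hab heq
      have hle2 := qdist_le_of_eq hG hsub hclosed hba heq.symm
      omega

end claimD

section assemble

variable [Finite V] {G : SimpleGraph V} {F : Set (Sym2 V)}

lemma nval_quot_of_closed (hG : G.Connected) (hsub : F ⊆ G.edgeSet)
    (hclosed : ∀ e ∈ F, ∀ f, Theta G e f → f ∈ F)
    {u v : V} (huv : s(u, v) ∈ F) (wv : V → ℝ) :
    nval G wv u v =
      nval (quotGraph G F) (qwv G F wv) (proj G F u) (proj G F v) := by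
  classical
  set NQ : Set (Comp G F) := Nset (quotGraph G F) (proj G F u) (proj G F v) with hNQ
  have hmem : ∀ x : V, x ∈ Nset G u v ↔ proj G F x ∈ NQ := by
    intro x
    have hiff := dist_lt_iff_qdist_lt hG hsub hclosed (x := x) huv
    have c1 : G.dist u x = G.dist x u := G.dist_comm
    have c2 : G.dist v x = G.dist x v := G.dist_comm
    have c3 : (quotGraph G F).dist (proj G F u) (proj G F x) =
        (quotGraph G F).dist (proj G F x) (proj G F u) := SimpleGraph.dist_comm
    have c4 : (quotGraph G F).dist (proj G F v) (proj G F x) =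
        (quotGraph G F).dist (proj G F x) (proj G F v) := SimpleGraph.dist_comm
    constructor
    · intro hx
      have : G.dist x u < G.dist x v := by
        simpa [Nset, c1, c2] using hx
      have hq := hiff.mp this
      unfold qdist at hq
      simp only [hNQ, Nset, Set.mem_setOf_eq, c3, c4]
      omega
    · intro hx
      have hq : qdist G F x u < qdist G F x v := by
        simp only [hNQ, Nset, Set.mem_setOf_eq] at hx
        unfold qdist
        omega
      have := hiff.mpr hq
      simpa [Nset, c1, c2] using this
  have hfinComp : Finite (Comp G F) :=
    Finite.of_surjective (proj G F) (fun X => X.exists_rep)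
  have hdisj : NQ.PairwiseDisjoint (fun X : Comp G F => X.supp) := by
    intro X _ Y _ hXY
    rw [Function.onFun, Set.disjoint_left]
    intro x hx hy
    rw [SimpleGraph.ConnectedComponent.mem_supp_iff] at hx hy
    exact hXY (hx.symm.trans hy)
  have hunion : ⋃ X ∈ NQ, (X : Comp G F).supp = Nset G u v := by
    ext x
    simp only [Set.mem_iUnion, SimpleGraph.ConnectedComponent.mem_supp_iff, exists_prop]
    constructor
    · rintro ⟨X, hX, rfl⟩
      exact (hmem x).mpr hX
    · intro hx
      exact ⟨proj G F x, (hmem x).mp hx, rfl⟩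
  have := finsum_mem_biUnion hdisj (Set.toFinite NQ)
    (fun X _ => Set.toFinite _) (f := wv)
  rw [hunion] at this
  unfold nval vsum qwv
  rw [this]
  rfl

end assemble

/-- For a connected strength-weighted graph, with `e = uv ∈ E_i`,
`U = ℓ_i(u)`, `V = ℓ_i(v)` and `E = UV` the corresponding edge of the strength-weighted
quotient graph `G_i = G_sw/E_i`: `n_u(e|G_sw) = n_U(E|G_i)` and `n_v(e|G_sw) = n_V(E|G_i)`. -/
theorem nval_eq_quotient {V : Type*} [Finite V] (G : SimpleGraph V) (hG : G.Connected)
    (wv sv : V → ℝ) (we se : Sym2 V → ℝ)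
    (hwv : ∀ x, 0 ≤ wv x) (hsv : ∀ x, 0 ≤ sv x)
    (hwe : ∀ e, 0 ≤ we e) (hse : ∀ e, 0 ≤ se e)
    {k : ℕ} (P : Fin k → Set (Sym2 V)) (hP : IsCPartition G P)
    (i : Fin k) (u v : V) (he : s(u, v) ∈ P i) :
    nval G wv u v =
      nval (quotGraph G (P i)) (qwv G (P i) wv) (proj G (P i) u) (proj G (P i) v) ∧
    nval G wv v u =
      nval (quotGraph G (P i)) (qwv G (P i) wv) (proj G (P i) v) (proj G (P i) u) := by
  have hsub : P i ⊆ G.edgeSet := by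
    intro e heF
    have hmem : e ∈ ⋃ j, P j := Set.mem_iUnion_of_mem i heF
    rwa [hP.1] at hmem
  have hclosed : ∀ e ∈ P i, ∀ f, Theta G e f → f ∈ P i :=
    fun e heF f hf => hP.2.2 i e heF f (Relation.TransGen.single hf)
  have hvu : s(v, u) ∈ P i := by rwa [Sym2.eq_swap]
  exact ⟨nval_quot_of_closed hG hsub hclosed he wv,
    nval_quot_of_closed hG hsub hclosed hvu wv⟩


end SzegedCut
end

section
/- Let G_sw be a connected strength-weighted graph, {E_1, …, E_k} a c-partition of E(G), e = uv ∈ E_i, U = ℓ_i(u), V = ℓ_i(v), and E = UV the corresponding edge of the strength-weighted quotient graph G_i = G_sw/E_i. Then n_0(e|G_sw) = n_0(E|G_i), i.e. Σ_{x ∈ N_0(e|G)} w_v(x) = Σ_{X ∈ N_0(E|G_i)} w_v^i(X). -/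
open SimpleGraph

namespace SzegedCut

variable {V : Type*}

section CutMethod

open SimpleGraph Walk Finset

variable {k : ℕ}

open Classical in
/-- Number of edges of a walk that lie in `F`. -/
noncomputable def cF (G : SimpleGraph V) (F : Set (Sym2 V)) {x y : V} (W : G.Walk x y) : ℕ :=
  ∑ t ∈ Finset.range W.length, if s(W.getVert t, W.getVert (t + 1)) ∈ F then 1 else 0

lemma cF_nil {G : SimpleGraph V} {F : Set (Sym2 V)} {x : V} :
    cF G F (Walk.nil : G.Walk x x) = 0 := by simp [cF]

open Classical in
lemma cF_cons {G : SimpleGraph V} {F : Set (Sym2 V)} {a b y : V} (h : G.Adj a b)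
    (W : G.Walk b y) :
    cF G F (Walk.cons h W) = (if s(a, b) ∈ F then 1 else 0) + cF G F W := by
  classical
  unfold cF
  rw [Walk.length_cons, Finset.sum_range_succ']
  simp only [Walk.getVert_cons_succ, Walk.getVert_zero, zero_add,
    Walk.getVert_cons_succ (n := 0)]
  rw [add_comm]
  congr

lemma cF_append {G : SimpleGraph V} {F : Set (Sym2 V)} :
    ∀ {a b c : V} (W1 : G.Walk a b) (W2 : G.Walk b c),
      cF G F (W1.append W2) = cF G F W1 + cF G F W2 := by
  intro a b c W1
  induction W1 with
  | nil => intro W2; rw [Walk.nil_append, cF_nil, Nat.zero_add]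
  | cons h W ih => intro W2; rw [Walk.cons_append, cF_cons, cF_cons, ih, Nat.add_assoc]

lemma dist_getVert_le {G : SimpleGraph V} (hG : G.Connected) :
    ∀ {a b : V} (W : G.Walk a b) (t : ℕ), G.dist a (W.getVert t) ≤ t := by
  intro a b W
  induction W with
  | nil =>
    intro t
    simp [Walk.getVert, SimpleGraph.dist_self]
  | @cons a m b h W ih =>
    intro t
    cases t with
    | zero => simp
    | succ t =>
      rw [Walk.getVert_cons_succ]
      calc G.dist a (W.getVert t) ≤ G.dist a m + G.dist m (W.getVert t) :=
            hG.dist_triangle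
        _ ≤ 1 + t := by
            have h1 : G.dist a m ≤ 1 := by
              simpa using SimpleGraph.dist_le (Walk.cons h (Walk.nil : G.Walk m m))
            exact Nat.add_le_add h1 (ih t)
        _ = t + 1 := Nat.add_comm _ _

lemma dist_getVert_suffix {G : SimpleGraph V} (hG : G.Connected) :
    ∀ {a b : V} (W : G.Walk a b) (t : ℕ), t ≤ W.length →
      G.dist (W.getVert t) b + t ≤ W.length := by
  intro a b W
  induction W with
  | nil =>
    intro t ht
    have ht0 : t = 0 := by simpa using ht
    subst ht0
    simp
  | @cons a m b h W ih =>
    intro t ht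
    cases t with
    | zero =>
      simp only [Walk.getVert_zero, Nat.add_zero, Walk.length_cons]
      calc G.dist a b ≤ G.dist a m + G.dist m b := hG.dist_triangle
        _ ≤ 1 + W.length := by
            have h1 : G.dist a m ≤ 1 := by
              simpa using SimpleGraph.dist_le (Walk.cons h (Walk.nil : G.Walk m m))
            exact Nat.add_le_add h1 (SimpleGraph.dist_le W)
        _ = W.length + 1 := Nat.add_comm _ _
    | succ t =>
      rw [Walk.getVert_cons_succ, Walk.length_cons]
      have := ih t (by simpa [Walk.length_cons] using ht)
      omega

lemma shortest_getVert {G : SimpleGraph V} (hG : G.Connected) {p q : V} (R : G.Walk p q)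
    (hR : R.length = G.dist p q) {t : ℕ} (ht : t ≤ R.length) :
    G.dist p (R.getVert t) = t ∧ G.dist (R.getVert t) q + t = R.length := by
  have h1 := dist_getVert_le hG R t
  have h2 := dist_getVert_suffix hG R t ht
  have h3 : G.dist p q ≤ G.dist p (R.getVert t) + G.dist (R.getVert t) q :=
    hG.dist_triangle
  omega

/-- From a c-partition: an edge in `P i` and an edge not in `P i` are never
`Θ`-related, hence satisfy the distance "parallelogram" law. -/
lemma swap_lemma {G : SimpleGraph V} {EP : Fin k → Set (Sym2 V)} (hP : IsCPartition G EP)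
    (i : Fin k) {a b c d : V} (hab : G.Adj a b) (hcd : G.Adj c d)
    (h1 : s(a, b) ∈ EP i) (h2 : s(c, d) ∉ EP i) :
    G.dist a c + G.dist b d = G.dist a d + G.dist c b := by
  by_contra hne
  exact h2 (hP.2.2 i _ h1 _ (Relation.TransGen.single
    ⟨G.mem_edgeSet.mpr hab, G.mem_edgeSet.mpr hcd, a, b, c, d, rfl, rfl, hne⟩))

lemma swap_psi {G : SimpleGraph V} {EP : Fin k → Set (Sym2 V)} (hP : IsCPartition G EP)
    (i : Fin k) {a b c d : V} (hab : G.Adj a b) (hcd : G.Adj c d)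
    (h1 : s(a, b) ∈ EP i) (h2 : s(c, d) ∉ EP i) :
    (G.dist a c : ℤ) - G.dist b c = (G.dist a d : ℤ) - G.dist b d := by
  have h := swap_lemma hP i hab hcd h1 h2
  have hc : G.dist c b = G.dist b c := SimpleGraph.dist_comm
  omega

lemma swap_psi' {G : SimpleGraph V} {EP : Fin k → Set (Sym2 V)} (hP : IsCPartition G EP)
    (i : Fin k) {a b c d : V} (hab : G.Adj a b) (hcd : G.Adj c d)
    (h1 : s(a, b) ∈ EP i) (h2 : s(c, d) ∉ EP i) :
    (G.dist c a : ℤ) - G.dist d a = (G.dist c b : ℤ) - G.dist d b := by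
  have h := swap_lemma hP i hab hcd h1 h2
  have e1 : G.dist a c = G.dist c a := SimpleGraph.dist_comm
  have e2 : G.dist b d = G.dist d b := SimpleGraph.dist_comm
  have e3 : G.dist a d = G.dist d a := SimpleGraph.dist_comm
  omega

open Classical in
/-- The signed sum, over `F`-edges of a fixed walk `R`, of distance differences to `w`. -/
noncomputable def Sfun (G : SimpleGraph V) (F : Set (Sym2 V)) {p q : V} (R : G.Walk p q)
    (w : V) : ℤ :=
  ∑ t ∈ Finset.range R.length,
    if s(R.getVert t, R.getVert (t + 1)) ∈ F then
      ((G.dist (R.getVert t) w : ℤ) - (G.dist (R.getVert (t + 1)) w : ℤ))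
    else 0

lemma Sfun_start {G : SimpleGraph V} (hG : G.Connected) {F : Set (Sym2 V)} {p q : V}
    (R : G.Walk p q) (hR : R.length = G.dist p q) :
    Sfun G F R p = -(cF G F R : ℤ) := by
  classical
  unfold Sfun cF
  rw [Nat.cast_sum, ← Finset.sum_neg_distrib]
  refine Finset.sum_congr rfl ?_
  intro t ht
  rw [Finset.mem_range] at ht
  have h1 := (shortest_getVert hG R hR (t := t) (by omega)).1
  have h2 := (shortest_getVert hG R hR (t := t + 1) (by omega)).1
  have c1 : G.dist (R.getVert t) p = G.dist p (R.getVert t) := SimpleGraph.dist_comm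
  have c2 : G.dist (R.getVert (t + 1)) p = G.dist p (R.getVert (t + 1)) :=
    SimpleGraph.dist_comm
  split_ifs with hmem
  · push_cast
    omega
  · simp

lemma Sfun_end {G : SimpleGraph V} (hG : G.Connected) {F : Set (Sym2 V)} {p q : V}
    (R : G.Walk p q) (hR : R.length = G.dist p q) :
    Sfun G F R q = (cF G F R : ℤ) := by
  classical
  unfold Sfun cF
  rw [Nat.cast_sum]
  refine Finset.sum_congr rfl ?_
  intro t ht
  rw [Finset.mem_range] at ht
  have h1 := (shortest_getVert hG R hR (t := t) (by omega)).2
  have h2 := (shortest_getVert hG R hR (t := t + 1) (by omega)).2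
  split_ifs with hmem
  · push_cast
    omega
  · simp

lemma sum_all_telescope {G : SimpleGraph V} {p q : V} (R : G.Walk p q) (w : V) :
    ∑ t ∈ Finset.range R.length,
        ((G.dist (R.getVert t) w : ℤ) - (G.dist (R.getVert (t + 1)) w : ℤ)) =
      (G.dist p w : ℤ) - G.dist q w := by
  have h := Finset.sum_range_sub' (fun t => (G.dist (R.getVert t) w : ℤ)) R.length
  simpa using h

lemma Sfun_step_notF {G : SimpleGraph V} {EP : Fin k → Set (Sym2 V)}
    (hP : IsCPartition G EP) (i : Fin k) {p q : V} (R : G.Walk p q) {α β : V}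
    (hadj : G.Adj α β) (hnF : s(α, β) ∉ EP i) :
    Sfun G (EP i) R α = Sfun G (EP i) R β := by
  classical
  unfold Sfun
  refine Finset.sum_congr rfl ?_
  intro t ht
  rw [Finset.mem_range] at ht
  split_ifs with hmem
  · exact swap_psi hP i (R.adj_getVert_succ ht) hadj hmem hnF
  · rfl

lemma Sfun_step_F {G : SimpleGraph V} {EP : Fin k → Set (Sym2 V)}
    (hP : IsCPartition G EP) (i : Fin k) {p q : V} (R : G.Walk p q) {α β : V}
    (hadj : G.Adj α β) (hIn : s(α, β) ∈ EP i) :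
    Sfun G (EP i) R β - Sfun G (EP i) R α =
      ((G.dist p β : ℤ) - G.dist q β) - ((G.dist p α : ℤ) - G.dist q α) := by
  classical
  have hsplit : ∀ w : V, Sfun G (EP i) R w +
      (∑ t ∈ Finset.range R.length,
        if s(R.getVert t, R.getVert (t + 1)) ∈ EP i then (0 : ℤ) else
          ((G.dist (R.getVert t) w : ℤ) - (G.dist (R.getVert (t + 1)) w : ℤ))) =
      (G.dist p w : ℤ) - G.dist q w := by
    intro w
    rw [← sum_all_telescope R w]
    unfold Sfun
    rw [← Finset.sum_add_distrib]
    refine Finset.sum_congr rfl ?_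
    intro t _
    split_ifs <;> ring
  have hT : (∑ t ∈ Finset.range R.length,
        if s(R.getVert t, R.getVert (t + 1)) ∈ EP i then (0 : ℤ) else
          ((G.dist (R.getVert t) α : ℤ) - (G.dist (R.getVert (t + 1)) α : ℤ))) =
      (∑ t ∈ Finset.range R.length,
        if s(R.getVert t, R.getVert (t + 1)) ∈ EP i then (0 : ℤ) else
          ((G.dist (R.getVert t) β : ℤ) - (G.dist (R.getVert (t + 1)) β : ℤ))) := by
    refine Finset.sum_congr rfl ?_
    intro t ht
    rw [Finset.mem_range] at ht
    split_ifs with hmem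
    · rfl
    · exact swap_psi' hP i hadj (R.adj_getVert_succ ht) hIn hmem
  have h1 := hsplit α
  have h2 := hsplit β
  rw [hT] at h1
  omega

lemma dist_adj_le {G : SimpleGraph V} (hG : G.Connected) {a b : V} (h : G.Adj a b)
    (w : V) : G.dist w b ≤ G.dist w a + 1 := by
  calc G.dist w b ≤ G.dist w a + G.dist a b := hG.dist_triangle
    _ ≤ G.dist w a + 1 := by
        have h1 : G.dist a b ≤ 1 := by
          simpa using SimpleGraph.dist_le (Walk.cons h (Walk.nil : G.Walk b b))
        omega

lemma Sfun_walk_le {G : SimpleGraph V} (hG : G.Connected) {EP : Fin k → Set (Sym2 V)}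
    (hP : IsCPartition G EP) (i : Fin k) {p q : V} (R : G.Walk p q) :
    ∀ {a b : V} (W : G.Walk a b),
      Sfun G (EP i) R b - Sfun G (EP i) R a ≤ 2 * (cF G (EP i) W : ℤ) := by
  classical
  intro a b W
  induction W with
  | nil => simp
  | @cons a m b h W ih =>
    rw [cF_cons]
    by_cases hm : s(a, m) ∈ EP i
    · have h1 := Sfun_step_F hP i R h hm
      have e1 := dist_adj_le hG h p
      have e2 := dist_adj_le hG h.symm p
      have e3 := dist_adj_le hG h q
      have e4 := dist_adj_le hG h.symm q
      rw [if_pos hm]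
      push_cast
      omega
    · have h1 := Sfun_step_notF hP i R h hm
      rw [if_neg hm, h1]
      simpa using ih

/-- Every shortest path uses the minimum possible number of `E_i`-edges. -/
lemma cF_min {G : SimpleGraph V} (hG : G.Connected) {EP : Fin k → Set (Sym2 V)}
    (hP : IsCPartition G EP) (i : Fin k) {p q : V} (R : G.Walk p q)
    (hR : R.length = G.dist p q) (W : G.Walk p q) :
    cF G (EP i) R ≤ cF G (EP i) W := by
  have h1 := Sfun_walk_le hG hP i R W
  rw [Sfun_start hG R hR, Sfun_end hG R hR] at h1
  omega

lemma proj_eq_of_not_mem {G : SimpleGraph V} {F : Set (Sym2 V)} {a b : V}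
    (h : G.Adj a b) (hn : s(a, b) ∉ F) : proj G F a = proj G F b := by
  have hadj : (G.deleteEdges F).Adj a b := by
    rw [SimpleGraph.deleteEdges_adj]; exact ⟨h, hn⟩
  exact ConnectedComponent.sound hadj.reachable

lemma quot_walk_of_walk {G : SimpleGraph V} {F : Set (Sym2 V)} :
    ∀ {a b : V} (W : G.Walk a b),
      ∃ WQ : (quotGraph G F).Walk (proj G F a) (proj G F b), WQ.length ≤ cF G F W := by
  intro a b W
  induction W with
  | nil => exact ⟨Walk.nil, by simp⟩
  | @cons a m b h W ih =>
    obtain ⟨WQ', hWQ'⟩ := ih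
    rw [cF_cons]
    by_cases hm : s(a, m) ∈ F
    · by_cases hpr : proj G F a = proj G F m
      · rw [hpr]
        exact ⟨WQ', by rw [if_pos hm]; omega⟩
      · have hQadj : (quotGraph G F).Adj (proj G F a) (proj G F m) :=
          ⟨hpr, a, m, h, rfl, rfl⟩
        exact ⟨Walk.cons hQadj WQ', by rw [Walk.length_cons, if_pos hm]; omega⟩
    · rw [proj_eq_of_not_mem h hm]
      exact ⟨WQ', by rw [if_neg hm]; omega⟩

lemma exists_walk_cF_zero {G : SimpleGraph V} {F : Set (Sym2 V)} :
    ∀ {a b : V}, (G.deleteEdges F).Walk a b → ∃ W : G.Walk a b, cF G F W = 0 := by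
  intro a b W0
  induction W0 with
  | nil => exact ⟨Walk.nil, cF_nil⟩
  | @cons a m b h W0 ih =>
    rw [SimpleGraph.deleteEdges_adj] at h
    obtain ⟨W, hW⟩ := ih
    exact ⟨Walk.cons h.1 W, by rw [cF_cons, if_neg h.2, hW]⟩

lemma walk_zero_of_proj_eq {G : SimpleGraph V} {F : Set (Sym2 V)} {a b : V}
    (hab : proj G F a = proj G F b) : ∃ W : G.Walk a b, cF G F W = 0 := by
  obtain ⟨W0⟩ := ConnectedComponent.exact hab
  exact exists_walk_cF_zero W0

lemma walk_of_quot_walk {G : SimpleGraph V} {F : Set (Sym2 V)} :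
    ∀ {X Y : Comp G F} (WQ : (quotGraph G F).Walk X Y) {a b : V},
      proj G F a = X → proj G F b = Y → ∃ W : G.Walk a b, cF G F W ≤ WQ.length := by
  intro X Y WQ
  induction WQ with
  | nil =>
    intro a b ha hb
    obtain ⟨W, hW⟩ := walk_zero_of_proj_eq (F := F) (ha.trans hb.symm)
    exact ⟨W, by omega⟩
  | @cons X M Y h WQ ih =>
    intro a b ha hb
    obtain ⟨hne, x', y', hxy, hx, hy⟩ := h
    have hmem : s(x', y') ∈ F := by
      by_contra hn
      exact hne (hx ▸ hy ▸ proj_eq_of_not_mem hxy hn)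
    obtain ⟨W1, hW1⟩ := walk_zero_of_proj_eq (F := F) (ha.trans hx.symm)
    obtain ⟨W2, hW2⟩ := ih hy hb
    refine ⟨W1.append (Walk.cons hxy W2), ?_⟩
    rw [cF_append, cF_cons, if_pos hmem, hW1]; show _ ≤ WQ.length + 1
    omega

lemma quot_dist_eq {G : SimpleGraph V} (hG : G.Connected) {EP : Fin k → Set (Sym2 V)}
    (hP : IsCPartition G EP) (i : Fin k) {p q : V} (R : G.Walk p q)
    (hR : R.length = G.dist p q) :
    (quotGraph G (EP i)).dist (proj G (EP i) p) (proj G (EP i) q) = cF G (EP i) R := by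
  obtain ⟨WQ, hWQ⟩ := quot_walk_of_walk (F := EP i) R
  have hle : (quotGraph G (EP i)).dist (proj G (EP i) p) (proj G (EP i) q) ≤
      cF G (EP i) R := le_trans (SimpleGraph.dist_le WQ) hWQ
  have hreach : (quotGraph G (EP i)).Reachable (proj G (EP i) p) (proj G (EP i) q) := ⟨WQ⟩
  obtain ⟨WQ0, hWQ0⟩ := hreach.exists_walk_length_eq_dist
  obtain ⟨W, hW⟩ := walk_of_quot_walk WQ0 rfl rfl
  have hmin := cF_min hG hP i R hR W
  omega

/-- A vertex is equidistant from the endpoints of `e = uv ∈ E_i` iff its component is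
equidistant (in the quotient graph) from the components of `u` and `v`. -/
lemma dist_iff_quot {G : SimpleGraph V} (hG : G.Connected) {EP : Fin k → Set (Sym2 V)}
    (hP : IsCPartition G EP) (i : Fin k) {u v : V} (he : s(u, v) ∈ EP i) (z : V) :
    (G.dist u z = G.dist v z) ↔
      (quotGraph G (EP i)).dist (proj G (EP i) u) (proj G (EP i) z) =
        (quotGraph G (EP i)).dist (proj G (EP i) v) (proj G (EP i) z) := by
  classical
  have hadj : G.Adj u v := by
    have : s(u, v) ∈ G.edgeSet := hP.1 ▸ Set.mem_iUnion.mpr ⟨i, he⟩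
    exact G.mem_edgeSet.mp this
  have hvu : s(v, u) ∈ EP i := by rwa [Sym2.eq_swap]
  obtain ⟨Pu, hPu⟩ := hG.exists_walk_length_eq_dist u z
  obtain ⟨Pv, hPv⟩ := hG.exists_walk_length_eq_dist v z
  have hdu := quot_dist_eq hG hP i Pu hPu
  have hdv := quot_dist_eq hG hP i Pv hPv
  have hd1 : G.dist v z ≤ G.dist u z + 1 := by
    have t := hG.dist_triangle (u := v) (v := u) (w := z)
    have e : G.dist v u = 1 := SimpleGraph.dist_eq_one_iff_adj.mpr hadj.symm
    omega
  have hd2 : G.dist u z ≤ G.dist v z + 1 := by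
    have t := hG.dist_triangle (u := u) (v := v) (w := z)
    have e : G.dist u v = 1 := SimpleGraph.dist_eq_one_iff_adj.mpr hadj
    omega
  rcases lt_trichotomy (G.dist u z) (G.dist v z) with hlt | heq | hgt
  · -- dist v z = dist u z + 1 : prepend edge vu to Pu
    have hveq : (Walk.cons hadj.symm Pu).length = G.dist v z := by
      rw [Walk.length_cons, hPu]; omega
    have h2 := quot_dist_eq hG hP i (Walk.cons hadj.symm Pu) hveq
    rw [cF_cons, if_pos hvu] at h2
    refine iff_of_false (by omega) (by omega)
  · -- equal distances: show the crossing numbers agree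
    have key : ∀ (a b : V), G.Adj a b → s(a, b) ∈ EP i →
        G.dist a z = G.dist b z →
        ∀ (Ra : G.Walk a z) (Rb : G.Walk b z), Ra.length = G.dist a z →
          Rb.length = G.dist b z → cF G (EP i) Ra ≤ cF G (EP i) Rb := by
      intro a b hab hmem hdeq Ra Rb hRa hRb
      have hSa := Sfun_start hG (F := EP i) Ra hRa
      have hSz := Sfun_end hG (F := EP i) Ra hRa
      -- step across edge (a, b) : Sfun Ra b - Sfun Ra a = D b - D a = 1
      have hstep := Sfun_step_F hP i Ra hab hmem
      have hwalk := Sfun_walk_le hG hP i Ra Rb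
      have e1 : G.dist a a = 0 := SimpleGraph.dist_self
      have e2 : G.dist a b = 1 := SimpleGraph.dist_eq_one_iff_adj.mpr hab
      have e3 : G.dist z a = G.dist a z := SimpleGraph.dist_comm
      have e4 : G.dist z b = G.dist b z := SimpleGraph.dist_comm
      omega
    have hba : G.Adj v u := hadj.symm
    have h1 := key u v hadj he heq Pu Pv hPu hPv
    have h2 := key v u hba hvu heq.symm Pv Pu hPv hPu
    refine iff_of_true heq ?_
    omega
  · -- symmetric to the first case
    have hueq : (Walk.cons hadj Pv).length = G.dist u z := by
      rw [Walk.length_cons, hPv]; omega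
    have h2 := quot_dist_eq hG hP i (Walk.cons hadj Pv) hueq
    rw [cF_cons, if_pos he] at h2
    refine iff_of_false (by omega) (by omega)

end CutMethod

/-- For a connected strength-weighted graph, with `e = uv ∈ E_i`,
`U = ℓ_i(u)`, `V = ℓ_i(v)` and `E = UV` the corresponding edge of the strength-weighted
quotient graph `G_i = G_sw/E_i`: `n_0(e|G_sw) = n_0(E|G_i)`, i.e.
`Σ_{x ∈ N_0(e|G)} w_v(x) = Σ_{X ∈ N_0(E|G_i)} w_v^i(X)`. -/
theorem n0val_eq_quotient {V : Type*} [Finite V] (G : SimpleGraph V) (hG : G.Connected)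
    (wv sv : V → ℝ) (we se : Sym2 V → ℝ)
    (hwv : ∀ x, 0 ≤ wv x) (hsv : ∀ x, 0 ≤ sv x)
    (hwe : ∀ e, 0 ≤ we e) (hse : ∀ e, 0 ≤ se e)
    {k : ℕ} (P : Fin k → Set (Sym2 V)) (hP : IsCPartition G P)
    (i : Fin k) (u v : V) (he : s(u, v) ∈ P i) :
    n0val G wv u v =
      n0val (quotGraph G (P i)) (qwv G (P i) wv) (proj G (P i) u) (proj G (P i) v) := by
  classical
  set F := P i with hF
  set Q := quotGraph G F with hQ
  set U := proj G F u with hU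
  set W := proj G F v with hW
  have hset : N0set G u v = ⋃ X ∈ N0set Q U W, X.supp := by
    ext z
    simp only [N0set, Set.mem_setOf_eq, Set.mem_iUnion, exists_prop]
    constructor
    · intro hz
      exact ⟨proj G F z, (dist_iff_quot hG hP i he z).mp hz, rfl⟩
    · rintro ⟨X, hX, hzX⟩
      have : proj G F z = X := hzX
      exact (dist_iff_quot hG hP i he z).mpr (this ▸ hX)
  have hdisj : (N0set Q U W).PairwiseDisjoint (fun X : Comp G F => X.supp) := by
    intro X _ Y _ hne
    rw [Function.onFun, Set.disjoint_left]
    intro z hzX hzY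
    exact hne ((ConnectedComponent.mem_supp_iff X z).mp hzX ▸
      (ConnectedComponent.mem_supp_iff Y z).mp hzY)
  have hfin : (N0set Q U W).Finite := Set.toFinite _
  have hfin' : ∀ X ∈ N0set Q U W, (ConnectedComponent.supp X).Finite :=
    fun X _ => Set.toFinite _
  rw [n0val, vsum, hset, finsum_mem_biUnion hdisj hfin hfin']
  rfl

end SzegedCut
end
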